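/- arXiv:1707.09418 — 3 statements merged into one kernel-verified Lean document; each statement's English description precedes it below -/
import Mathlib

section
/- Let p_1, …, p_n be pairwise coprime positive integers, let 1 ≤ k ≤ n, and let M be a positive integer such that M ≤ ∏_{i ∈ S} p_i for every subset S ⊆ {1, …, n} with |S| = k. Define φ(m) = (m mod p_1, …, m mod p_n). Then for any two distinct natural numbers m, m' with 0 ≤ m, m' < M, the Hamming distance between φ(m) and φ(m') is at least n − k + 1; i.e., the minimum Hamming distance of the Chinese Remainder Code {φ(m) : 0 ≤ m < M} is at least n − k + 1. -/
/-! If `m` and `m'` agree modulo every `p i` with `i` in a set `A`, then by the Chinese remainder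
theorem they agree modulo `∏ i ∈ A, p i`. Were `A` to contain `k` indices, this product would be at
least `M > m, m'`, forcing `m = m'`. So distinct codewords agree in fewer than `k` coordinates. -/

open Finset

open scoped Function in
theorem Nat.modEq_finset_prod_iff {ι : Type*} {s : Finset ι} {p : ι → ℕ} {a b : ℕ}
    (hp : (s : Set ι).Pairwise (Nat.Coprime on p)) :
    a ≡ b [MOD ∏ i ∈ s, p i] ↔ ∀ i ∈ s, a ≡ b [MOD p i] := by
  rw [← Finset.prod_map_toList, Nat.modEq_list_map_prod_iff]
  · simp only [Finset.mem_toList]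
  · exact s.nodup_toList.pairwise_of_forall_ne fun i hi j hj hij =>
      hp (mem_toList.1 hi) (mem_toList.1 hj) hij

theorem Finset.le_prod_of_card_le {ι N : Type*} [CommMonoid N] [PartialOrder N]
    [IsOrderedMonoid N] {f : ι → N} (hf : ∀ i, 1 ≤ f i) {k : ℕ} {b : N}
    (hb : ∀ S : Finset ι, #S = k → b ≤ ∏ i ∈ S, f i) {A : Finset ι} (hkA : k ≤ #A) :
    b ≤ ∏ i ∈ A, f i := by
  obtain ⟨S, hSA, hS⟩ := exists_subset_card_eq hkA
  exact (hb S hS).trans (prod_le_prod_of_subset_of_one_le' hSA fun i _ _ => hf i)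

theorem hammingDist_eq_card_sub_card_filter_eq {ι : Type*} [Fintype ι] {β : ι → Type*}
    [∀ i, DecidableEq (β i)] (x y : ∀ i, β i) :
    hammingDist x y = Fintype.card ι - #{i | x i = y i} := by
  rw [← card_univ]
  exact Nat.eq_sub_of_add_eq' (card_filter_add_card_filter_not _)

theorem crc_min_hamming_distance_general
    (n : ℕ) (p : Fin n → ℕ)
    (hpos : ∀ i, 0 < p i)
    (hcop : ∀ i j, i ≠ j → Nat.Coprime (p i) (p j))
    (k : ℕ) (hkn : k ≤ n)
    (M : ℕ)
    (hM : ∀ S : Finset (Fin n), S.card = k → M ≤ ∏ i ∈ S, p i)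
    (m m' : ℕ) (hm : m < M) (hm' : m' < M) (hne : m ≠ m') :
    n - k + 1 ≤
      hammingDist (fun i : Fin n => m % p i) (fun i : Fin n => m' % p i) := by
  rw [hammingDist_eq_card_sub_card_filter_eq, Fintype.card_fin]
  set A : Finset (Fin n) := {i | m % p i = m' % p i}
  have hA : #A < k := by
    by_contra! hkA
    have hMA : M ≤ ∏ i ∈ A, p i := le_prod_of_card_le hpos hM hkA
    have hmod : m ≡ m' [MOD ∏ i ∈ A, p i] :=
      (Nat.modEq_finset_prod_iff fun i _ j _ hij => hcop i j hij).2 fun i hi => (mem_filter.1 hi).2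
    exact hne (hmod.eq_of_lt_of_lt (hm.trans_le hMA) (hm'.trans_le hMA))
  omega

/-- **Minimum-distance lower bound of the Chinese Remainder Code.**
With pairwise coprime positive moduli `p i` and `M` not exceeding the product
of any `k` of the moduli, the encodings `φ m = (m % p 1, …, m % p n)` of any
two distinct `m, m' < M` are at Hamming distance at least `n - k + 1`. -/
theorem crc_min_hamming_distance
    (n : ℕ) (p : Fin n → ℕ)
    (hpos : ∀ i, 0 < p i)
    (hcop : ∀ i j, i ≠ j → Nat.Coprime (p i) (p j))
    (k : ℕ) (hk1 : 1 ≤ k) (hkn : k ≤ n)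
    (M : ℕ) (hMpos : 0 < M)
    (hM : ∀ S : Finset (Fin n), S.card = k → M ≤ ∏ i ∈ S, p i)
    (m m' : ℕ) (hm : m < M) (hm' : m' < M) (hne : m ≠ m') :
    n - k + 1 ≤
      hammingDist (fun i : Fin n => m % p i) (fun i : Fin n => m' % p i) :=
  crc_min_hamming_distance_general n p hpos hcop k hkn M hM m m' hm hm' hne
end

section
/- Let p_1 ≤ p_2 ≤ … ≤ p_n be pairwise coprime integers with p_i ≥ 2 for all i, let 1 ≤ k ≤ n, and let M = p_1 · p_2 ⋯ p_k. Define φ(m) = (m mod p_1, …, m mod p_n). Then there exist distinct natural numbers m, m' with 0 ≤ m, m' < M whose images φ(m) and φ(m') are at Hamming distance exactly n − k + 1; together with the lower bound n − k + 1, the minimum Hamming distance of the code {φ(m) : 0 ≤ m < M} equals n − k + 1. (Take m = 0 and m' = p_1 ⋯ p_{k−1}.) -/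
/-!
Two codewords that agree in `k` coordinates `T` are congruent modulo `∏ i ∈ T, p i`, and since
the moduli are sorted this product is at least `M`, so two distinct words below `M` agree in at
most `k - 1` places. Conversely `0` and `N = p 1 ⋯ p (k-1) < M` agree exactly in the first
`k - 1` coordinates, because by coprimality no later modulus divides `N`.
-/

open Finset Function

theorem Fin.val_le_of_strictMono {k n : ℕ} {g : Fin k → Fin n} (hg : StrictMono g) (j : Fin k) :
    (j : ℕ) ≤ g j := by
  rw [← Fin.card_Iio j, ← Fin.card_Iio (g j), ← card_map ⟨g, hg.injective⟩]
  refine card_le_card fun x hx => ?_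
  obtain ⟨i, hi, rfl⟩ := mem_map.1 hx
  exact mem_Iio.2 (hg (mem_Iio.1 hi))

theorem Fin.map_castLEEmb_univ {k n : ℕ} (h : k ≤ n) :
    (univ : Finset (Fin k)).map (Fin.castLEEmb h) = univ.filter (fun i : Fin n => (i : ℕ) < k) := by
  ext i
  simp only [mem_map, mem_univ, true_and, mem_filter, Fin.coe_castLEEmb]
  exact ⟨fun ⟨j, hj⟩ => hj ▸ j.2, fun hi => ⟨⟨i, hi⟩, rfl⟩⟩

theorem Fin.prod_filter_val_lt_succ {M : Type*} [CommMonoid M] {n j : ℕ} (hj : j < n)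
    (f : Fin n → M) :
    ∏ i ∈ univ.filter (fun i : Fin n => (i : ℕ) < j + 1), f i =
      f ⟨j, hj⟩ * ∏ i ∈ univ.filter (fun i : Fin n => (i : ℕ) < j), f i := by
  have hsplit : univ.filter (fun i : Fin n => (i : ℕ) < j + 1) =
      insert ⟨j, hj⟩ (univ.filter (fun i : Fin n => (i : ℕ) < j)) := by
    ext i
    simp only [mem_filter, mem_univ, true_and, mem_insert, Fin.ext_iff]
    omega
  rw [hsplit, prod_insert (by simp)]

theorem Monotone.prod_filter_val_lt_card_le_prod {M : Type*} [CommMonoid M] [Preorder M]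
    [MulLeftMono M] {n : ℕ} {f : Fin n → M} (hf : Monotone f) (s : Finset (Fin n)) :
    ∏ i ∈ univ.filter (fun i : Fin n => (i : ℕ) < #s), f i ≤ ∏ i ∈ s, f i := by
  rw [← Fin.map_castLEEmb_univ (by simpa using card_le_univ s), prod_map]
  conv_rhs => rw [← map_orderEmbOfFin_univ s rfl, prod_map]
  refine prod_le_prod' fun j _ => hf ?_
  exact Fin.val_le_of_strictMono (s.orderEmbOfFin rfl).strictMono j

theorem Nat.ModEq.prod_of_pairwise_coprime {ι : Type*} {p : ι → ℕ} {s : Finset ι}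
    (hcop : (s : Set ι).Pairwise (Nat.Coprime on p)) {a b : ℕ}
    (h : ∀ i ∈ s, a ≡ b [MOD p i]) : a ≡ b [MOD ∏ i ∈ s, p i] := by
  rw [Nat.modEq_iff_dvd, Nat.cast_prod]
  exact prod_dvd_of_coprime (fun i hi j hj hij => Nat.isCoprime_iff_coprime.2 (hcop hi hj hij))
    fun i hi => Nat.modEq_iff_dvd.1 (h i hi)

theorem Nat.dvd_prod_iff_mem_of_pairwise_coprime {ι : Type*} {p : ι → ℕ}
    (hcop : Pairwise (Nat.Coprime on p)) {s : Finset ι} {i : ι} (hp : p i ≠ 1) :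
    p i ∣ ∏ j ∈ s, p j ↔ i ∈ s := by
  refine ⟨fun hdvd => ?_, dvd_prod_of_mem p⟩
  by_contra hi
  have hcop_prod : Nat.Coprime (p i) (∏ j ∈ s, p j) :=
    Nat.Coprime.prod_right fun j hj => hcop (ne_of_mem_of_not_mem hj hi).symm
  exact hp (hcop_prod.eq_one_of_dvd hdvd)

theorem hammingDist_zero_mod_mod {ι : Type*} [Fintype ι] (p : ι → ℕ) (m : ℕ) :
    hammingDist (fun i => 0 % p i) (fun i => m % p i) = #{i | ¬ p i ∣ m} := by
  simp only [hammingDist, Nat.zero_mod, Nat.dvd_iff_mod_eq_zero, ne_comm]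

section CRTCode

variable {n : ℕ} {p : Fin n → ℕ}

theorem le_hammingDist_mod (hmono : Monotone p) (hcop : Pairwise (Nat.Coprime on p))
    {k : ℕ} (hkn : k ≤ n) {m m' : ℕ}
    (hm : m < ∏ i ∈ univ.filter (fun i : Fin n => (i : ℕ) < k), p i)
    (hm' : m' < ∏ i ∈ univ.filter (fun i : Fin n => (i : ℕ) < k), p i) (hne : m ≠ m') :
    n - k + 1 ≤ hammingDist (fun i => m % p i) (fun i => m' % p i) := by
  by_contra! hlt
  have hS : k ≤ #{i | m % p i = m' % p i} := by
    have hsum := card_filter_add_card_filter_not (s := univ) (fun i : Fin n => m % p i = m' % p i)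
    simp only [card_univ, Fintype.card_fin] at hsum
    simp only [hammingDist, ne_eq] at hlt
    omega
  obtain ⟨T, hTS, rfl⟩ := exists_subset_card_eq hS
  have hMT := hmono.prod_filter_val_lt_card_le_prod T
  have hmodEq : m ≡ m' [MOD ∏ i ∈ T, p i] :=
    Nat.ModEq.prod_of_pairwise_coprime (hcop.set_pairwise _) fun i hi => (mem_filter.1 (hTS hi)).2
  exact hne (hmodEq.eq_of_lt_of_lt (hm.trans_le hMT) (hm'.trans_le hMT))

theorem exists_hammingDist_mod_eq (h2 : ∀ i, 2 ≤ p i) (hcop : Pairwise (Nat.Coprime on p))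
    {k : ℕ} (hk1 : 1 ≤ k) (hkn : k ≤ n) :
    ∃ m m' : ℕ, m < ∏ i ∈ univ.filter (fun i : Fin n => (i : ℕ) < k), p i ∧
      m' < ∏ i ∈ univ.filter (fun i : Fin n => (i : ℕ) < k), p i ∧ m ≠ m' ∧
      hammingDist (fun i => m % p i) (fun i => m' % p i) = n - k + 1 := by
  obtain ⟨j, rfl⟩ : ∃ j, k = j + 1 := ⟨k - 1, by omega⟩
  set N := ∏ i ∈ univ.filter (fun i : Fin n => (i : ℕ) < j), p i
  have hN : 0 < N := prod_pos fun i _ => zero_lt_two.trans_le (h2 i)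
  have hNM : N < p ⟨j, hkn⟩ * N := lt_mul_of_one_lt_left hN (h2 _)
  rw [Fin.prod_filter_val_lt_succ hkn]
  refine ⟨0, N, hN.trans hNM, hNM, hN.ne, ?_⟩
  have hdvd : ∀ i, p i ∣ N ↔ (i : ℕ) < j := fun i => by
    rw [Nat.dvd_prod_iff_mem_of_pairwise_coprime hcop (by linarith [h2 i]), mem_filter_univ]
  simp only [hammingDist_zero_mod_mod, hdvd, filter_not, card_sdiff_of_subset (filter_subset _ _),
    card_univ, Fintype.card_fin, Fin.card_filter_val_lt]
  omega

end CRTCode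

/-- **The minimum Hamming distance of the Chinese Remainder Code is exactly
`n - k + 1`** (Goldreich et al.). For sorted pairwise coprime moduli
`2 ≤ p 1 ≤ … ≤ p n` and `M = p 1 ⋯ p k` the product of the `k` smallest, there
exist distinct `m, m' < M` whose encodings are at Hamming distance exactly
`n - k + 1`, while any two distinct encodings are at distance at least
`n - k + 1`. -/
theorem crc_min_hamming_distance_eq
    (n : ℕ) (p : Fin n → ℕ)
    (h2 : ∀ i, 2 ≤ p i)
    (hmono : Monotone p)
    (hcop : ∀ i j, i ≠ j → Nat.Coprime (p i) (p j))
    (k : ℕ) (hk1 : 1 ≤ k) (hkn : k ≤ n)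
    (M : ℕ) (hM : M = ∏ i ∈ Finset.univ.filter (fun i : Fin n => (i : ℕ) < k), p i) :
    (∃ m m' : ℕ, m < M ∧ m' < M ∧ m ≠ m' ∧
      hammingDist (fun i : Fin n => m % p i) (fun i : Fin n => m' % p i) =
        n - k + 1) ∧
    (∀ m m' : ℕ, m < M → m' < M → m ≠ m' →
      n - k + 1 ≤
        hammingDist (fun i : Fin n => m % p i) (fun i : Fin n => m' % p i)) := by
  subst hM
  exact ⟨exists_hammingDist_mod_eq h2 hcop hk1 hkn,
    fun m m' hm hm' hne => le_hammingDist_mod hmono hcop hkn hm hm' hne⟩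
end

section
/- Let p_1, …, p_n be pairwise coprime positive integers, let 1 ≤ k ≤ n, and let M be a positive integer such that M ≤ ∏_{i ∈ S} p_i for every subset S ⊆ {1, …, n} with |S| = k. Define φ(m) = (m mod p_1, …, m mod p_n). Suppose 0 ≤ m < M and r̃ is an n-tuple with r̃_i ∈ {0, …, p_i − 1} for each i that differs from φ(m) in at most ⌊(n − k)/2⌋ coordinates. Then for every m' with 0 ≤ m' < M and m' ≠ m, one has H(φ(m'), r̃) > H(φ(m), r̃); hence m is the unique minimizer over [0, M) of the Hamming distance H(φ(·), r̃), and Hamming distance decoding of the Chinese Remainder Code recovers m despite up to ⌊(n − k)/2⌋ incorrectly recognized symbols. -/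
open Finset Function

theorem Nat.modEq_prod_of_forall_modEq {ι : Type*} {s : Finset ι} {p : ι → ℕ}
    (hcop : (s : Set ι).Pairwise (Nat.Coprime on p)) {a b : ℕ}
    (h : ∀ i ∈ s, a ≡ b [MOD p i]) : a ≡ b [MOD ∏ i ∈ s, p i] := by
  rw [Nat.modEq_iff_dvd, Nat.cast_prod]
  exact Finset.prod_dvd_of_coprime
    (hcop.mono' fun _ _ hij => Nat.isCoprime_iff_coprime.mpr hij)
    fun i hi => Nat.modEq_iff_dvd.mp (h i hi)

theorem Nat.eq_of_forall_modEq_of_lt_prod {ι : Type*} {s : Finset ι} {p : ι → ℕ}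
    (hcop : (s : Set ι).Pairwise (Nat.Coprime on p)) {a b : ℕ}
    (h : ∀ i ∈ s, a ≡ b [MOD p i]) (ha : a < ∏ i ∈ s, p i) (hb : b < ∏ i ∈ s, p i) :
    a = b :=
  (Nat.modEq_prod_of_forall_modEq hcop h).eq_of_lt_of_lt ha hb

/-- The residues modulo any `k` of the moduli determine a number below `M`, so distinct
codewords agree in fewer than `k` places: the minimum distance is `card ι - k + 1`. -/
theorem card_lt_add_hammingDist_mod {ι : Type*} [Fintype ι] {p : ι → ℕ}
    (hcop : Pairwise (Nat.Coprime on p)) {k M : ℕ}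
    (hM : ∀ S : Finset ι, #S = k → M ≤ ∏ i ∈ S, p i) {a b : ℕ}
    (ha : a < M) (hb : b < M) (hab : a ≠ b) :
    Fintype.card ι < k + hammingDist (fun i => a % p i) (fun i => b % p i) := by
  classical
  have hagree : #{i | a % p i = b % p i} < k := by
    by_contra! hk
    obtain ⟨S, hSA, hSk⟩ := Finset.exists_subset_card_eq hk
    exact hab (Nat.eq_of_forall_modEq_of_lt_prod (hcop.set_pairwise _)
      (fun i hi => (Finset.mem_filter.mp (hSA hi)).2)
      (ha.trans_le (hM S hSk)) (hb.trans_le (hM S hSk)))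
  have hsplit := Finset.card_filter_add_card_filter_not (s := univ)
    (fun i => a % p i = b % p i)
  rw [card_univ] at hsplit
  simp only [hammingDist, ne_eq]
  omega

theorem hammingDist_lt_of_two_mul_lt {ι : Type*} [Fintype ι] {β : ι → Type*}
    [∀ i, DecidableEq (β i)] {x y r : ∀ i, β i}
    (h : 2 * hammingDist x r < hammingDist x y) : hammingDist x r < hammingDist y r := by
  have := hammingDist_triangle x r y
  rw [hammingDist_comm r y] at this
  omega

theorem crc_error_correction_general
    (n : ℕ) (p : Fin n → ℕ)
    (hcop : ∀ i j, i ≠ j → Nat.Coprime (p i) (p j))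
    (k : ℕ) (hkn : k ≤ n)
    (M : ℕ)
    (hM : ∀ S : Finset (Fin n), S.card = k → M ≤ ∏ i ∈ S, p i)
    (m : ℕ) (hm : m < M)
    (r : Fin n → ℕ)
    (herr : hammingDist (fun i : Fin n => m % p i) r ≤ (n - k) / 2) :
    ∀ m' : ℕ, m' < M → m' ≠ m →
      hammingDist (fun i : Fin n => m % p i) r <
        hammingDist (fun i : Fin n => m' % p i) r := by
  intro m' hm' hne
  have hdist := card_lt_add_hammingDist_mod hcop hM hm hm' hne.symm
  rw [Fintype.card_fin] at hdist
  exact hammingDist_lt_of_two_mul_lt (by omega)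

/-- **Error-correction guarantee of the Chinese Remainder Code.** With pairwise
coprime positive moduli `p i`, `M` not exceeding the product of any `k` of the
moduli, `m < M`, and a received tuple `r̃` (with `r̃ i < p i`) differing from
`φ m = (m % p 1, …, m % p n)` in at most `⌊(n - k)/2⌋` coordinates, the
encoding `φ m` is strictly closer to `r̃` than `φ m'` for every other
`m' < M`; hence Hamming decoding recovers `m` despite up to `⌊(n - k)/2⌋`
incorrectly recognized symbols. -/
theorem crc_error_correction
    (n : ℕ) (p : Fin n → ℕ)
    (hpos : ∀ i, 0 < p i)
    (hcop : ∀ i j, i ≠ j → Nat.Coprime (p i) (p j))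
    (k : ℕ) (hk1 : 1 ≤ k) (hkn : k ≤ n)
    (M : ℕ) (hMpos : 0 < M)
    (hM : ∀ S : Finset (Fin n), S.card = k → M ≤ ∏ i ∈ S, p i)
    (m : ℕ) (hm : m < M)
    (r : Fin n → ℕ) (hrange : ∀ i, r i < p i)
    (herr : hammingDist (fun i : Fin n => m % p i) r ≤ (n - k) / 2) :
    ∀ m' : ℕ, m' < M → m' ≠ m →
      hammingDist (fun i : Fin n => m % p i) r <
        hammingDist (fun i : Fin n => m' % p i) r :=
  crc_error_correction_general n p hcop k hkn M hM m hm r herr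
end
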